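/- arXiv:1905.06293 — 2 statements merged into one kernel-verified Lean document; each statement's English description precedes it below -/
import Mathlib

section
/- For every integer n ≥ 3, the cycle C_n on n vertices satisfies pid(C_n) = ⌈n/2⌉. -/
open scoped Classical

/-- `f : V → ℕ` is a perfect Italian dominating function of `G`:
labels are in `{0,1,2}` and every vertex labeled `0` has neighbor labels summing to exactly `2`. -/
def IsPIDFun {V : Type*} [Fintype V] (G : SimpleGraph V) (f : V → ℕ) : Prop :=
  (∀ v, f v ≤ 2) ∧ ∀ v, f v = 0 → (∑ u, if G.Adj v u then f u else 0) = 2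

/-- The perfect Italian domination number: minimum weight of a PID-function. -/
noncomputable def pid {V : Type*} [Fintype V] (G : SimpleGraph V) : ℕ :=
  sInf {w | ∃ f, IsPIDFun G f ∧ w = ∑ v, f v}

/-!
Each vertex labelled `0` receives exactly `2` from its neighbours, and in a graph of maximum
degree `2` each label is counted in at most two such neighbour sums, so twice the number of
`0`-vertices is at most twice the weight `w`; every other vertex carries a label `≥ 1`, so there
are at most `w` of those. Hence `n ≤ 2 w`. On `C_n` the indicator of the even-indexed vertices
has weight `⌈n/2⌉`, and every odd vertex (also `n - 1` when `n` is even, across the wrap-around)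
has two even neighbours.
-/

open Finset SimpleGraph

variable {V : Type*} [Fintype V] {G : SimpleGraph V} {f : V → ℕ}

-- `IsPIDFun` is stated with the classical `Decidable` instance; this form works with any.
lemma isPIDFun_iff [DecidableRel G.Adj] : IsPIDFun G f ↔
    (∀ v, f v ≤ 2) ∧ ∀ v, f v = 0 → ∑ u ∈ G.neighborFinset v, f u = 2 := by
  simp_rw [IsPIDFun, neighborFinset_eq_filter, sum_filter]
  congr!

lemma SimpleGraph.sum_sum_neighborFinset [DecidableRel G.Adj] {M : Type*} [AddCommMonoid M]
    (g : V → M) : ∑ v, ∑ u ∈ G.neighborFinset v, g u = ∑ u, G.degree u • g u := by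
  simp_rw [neighborFinset_eq_filter, sum_filter]
  rw [sum_comm]
  refine sum_congr rfl fun u _ => ?_
  rw [← sum_filter, sum_const, ← card_neighborFinset_eq_degree, neighborFinset_eq_filter]
  simp_rw [adj_comm]

namespace IsPIDFun

variable [DecidableRel G.Adj]

lemma two_mul_card_zero_le (hf : IsPIDFun G f) {Δ : ℕ} (hΔ : ∀ v, G.degree v ≤ Δ) :
    2 * #{v | f v = 0} ≤ Δ * ∑ v, f v :=
  calc 2 * #{v | f v = 0}
      = ∑ v with f v = 0, ∑ u ∈ G.neighborFinset v, f u := by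
        rw [mul_comm, ← smul_eq_mul, ← sum_const]
        exact sum_congr rfl fun v hv => ((isPIDFun_iff.1 hf).2 v (mem_filter.1 hv).2).symm
    _ ≤ ∑ v, ∑ u ∈ G.neighborFinset v, f u := sum_le_sum_of_subset (subset_univ _)
    _ = ∑ u, G.degree u * f u := G.sum_sum_neighborFinset f
    _ ≤ ∑ u, Δ * f u := sum_le_sum fun u _ => Nat.mul_le_mul_right _ (hΔ u)
    _ = Δ * ∑ v, f v := (mul_sum ..).symm

lemma card_le_two_mul_sum (hf : IsPIDFun G f) (hdeg : ∀ v, G.degree v ≤ 2) :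
    Fintype.card V ≤ 2 * ∑ v, f v := by
  have hzero := hf.two_mul_card_zero_le hdeg
  have hpos : #{v | ¬f v = 0} ≤ ∑ v, f v :=
    calc #{v | ¬f v = 0} = ∑ v with ¬f v = 0, 1 := card_eq_sum_ones _
      _ ≤ ∑ v with ¬f v = 0, f v :=
        sum_le_sum fun v hv => Nat.one_le_iff_ne_zero.2 (mem_filter.1 hv).2
      _ ≤ ∑ v, f v := sum_le_sum_of_subset (subset_univ _)
  have hsplit := card_filter_add_card_filter_not (s := univ) (fun v => f v = 0)
  rw [card_univ] at hsplit
  omega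

end IsPIDFun

lemma isPIDFun_one : IsPIDFun G 1 :=
  ⟨fun _ => by simp, fun _ h => absurd h one_ne_zero⟩

lemma pid_le (hf : IsPIDFun G f) : pid G ≤ ∑ v, f v :=
  Nat.sInf_le ⟨f, hf, rfl⟩

lemma le_pid {k : ℕ} (h : ∀ f, IsPIDFun G f → k ≤ ∑ v, f v) : k ≤ pid G :=
  le_csInf ⟨_, 1, isPIDFun_one, rfl⟩ (by rintro _ ⟨f, hf, rfl⟩; exact h f hf)

lemma SimpleGraph.cycleGraph_degree_le_two {n : ℕ} (v : Fin n) : (cycleGraph n).degree v ≤ 2 := by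
  match n with
  | 0 => exact v.elim0
  | 1 => simp [cycleGraph_one_eq_bot]
  | _ + 2 => exact cycleGraph_degree_two_le ▸ card_le_two

lemma SimpleGraph.even_of_cycleGraph_adj {n : ℕ} {u v : Fin n} (h : (cycleGraph n).Adj v u)
    (hv : ¬Even (v : ℕ)) : Even (u : ℕ) := by
  rw [Nat.not_even_iff_odd, Nat.odd_iff] at hv
  rw [Nat.even_iff]
  have := v.isLt
  have hne := h.ne'
  rw [cycleGraph_adj'] at h
  rcases hne.lt_or_gt with huv | huv
  · rw [Fin.coe_sub_iff_le.2 huv.le, Fin.coe_sub_iff_lt.2 huv] at h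
    omega
  · rw [Fin.coe_sub_iff_le.2 huv.le, Fin.coe_sub_iff_lt.2 huv] at h
    omega

lemma isPIDFun_cycleGraph_even {n : ℕ} (hn : 3 ≤ n) :
    IsPIDFun (cycleGraph n) (fun v => if Even (v : ℕ) then 1 else 0) := by
  obtain ⟨m, rfl⟩ : ∃ m, n = m + 3 := ⟨n - 3, by omega⟩
  refine isPIDFun_iff.2 ⟨fun v => by split_ifs <;> omega, fun v hv => ?_⟩
  have hodd : ¬Even (v : ℕ) := by simpa using hv
  rw [sum_const_nat fun u hu =>
    if_pos (even_of_cycleGraph_adj ((mem_neighborFinset _ _ _).1 hu) hodd),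
    card_neighborFinset_eq_degree, cycleGraph_degree_three_le]

lemma sum_fin_ite_even (n : ℕ) :
    ∑ v : Fin n, (if Even (v : ℕ) then 1 else 0) = (n + 1) / 2 := by
  rw [Fin.sum_univ_eq_sum_range (fun i => if Even i then 1 else 0)]
  induction n with
  | zero => rfl
  | succ k ih =>
    rw [sum_range_succ, ih]
    rcases Nat.even_or_odd' k with ⟨j, rfl | rfl⟩
    · rw [if_pos (even_two_mul j)]
      omega
    · rw [if_neg (Nat.not_even_iff_odd.2 (odd_two_mul_add_one j))]
      omega

/-- For every `n ≥ 3`, the cycle on `n` vertices has perfect Italian domination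
number `⌈n/2⌉`. -/
theorem pid_cycleGraph (n : ℕ) (hn : 3 ≤ n) :
    pid (SimpleGraph.cycleGraph n) = (n + 1) / 2 := by
  refine le_antisymm ?_ (le_pid fun f hf => ?_)
  · simpa only [sum_fin_ite_even] using pid_le (isPIDFun_cycleGraph_even hn)
  · have := hf.card_le_two_mul_sum cycleGraph_degree_le_two
    rw [Fintype.card_fin] at this
    omega
end

section
/- Let G be a connected finite simple graph with pid(G) > 2. Then pid(G) = 3 if and only if G has a 2-fair dominating set of cardinality 3. -/
open scoped Classical

/-- `D` is a 2-fair dominating set of `G`: a dominating set such that every vertex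
not in `D` has exactly two neighbors in `D`. -/
def IsTwoFairDomSet {V : Type*} [Fintype V] (G : SimpleGraph V) (D : Finset V) : Prop :=
  (∀ v ∉ D, ∃ u ∈ D, G.Adj v u) ∧ ∀ v ∉ D, (D.filter fun u => G.Adj v u).card = 2

/-!
A PID-function of weight 3 either takes only the values 0 and 1, and then its support is a
2-fair dominating set of size 3, or it is `2` at some vertex `a`, `1` at some `b` and `0`
elsewhere. In the latter case every vertex labelled `0` must be adjacent to `a` and not to `b`,
so by connectivity `b` is adjacent to `a` as well; then `a` is universal and putting `2` on `a`
alone gives weight 2. Conversely the indicator of a 2-fair dominating set is a PID-function.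
-/

open Finset

lemma Finset.exists_eq_one_of_sum_eq_one {ι : Type*} {s : Finset ι} {f : ι → ℕ}
    (h : ∑ i ∈ s, f i = 1) : ∃ i ∈ s, f i = 1 ∧ ∀ j ∈ s, j ≠ i → f j = 0 := by
  obtain ⟨i, hi, hfi⟩ := exists_ne_zero_of_sum_ne_zero (h ▸ one_ne_zero)
  have hsplit := add_sum_erase s f hi
  have hrest : ∑ j ∈ s.erase i, f j = 0 := by omega
  rw [sum_eq_zero_iff] at hrest
  exact ⟨i, hi, by omega, fun j hj hji => hrest j (mem_erase.mpr ⟨hji, hj⟩)⟩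

section

variable {V : Type*} [Fintype V] {G : SimpleGraph V}

lemma pid_le_sum_of_isPIDFun {f : V → ℕ} (hf : IsPIDFun G f) : pid G ≤ ∑ v, f v :=
  Nat.sInf_le ⟨f, hf, rfl⟩

variable (G) in
lemma exists_isPIDFun_sum_eq_pid : ∃ f, IsPIDFun G f ∧ ∑ v, f v = pid G := by
  obtain ⟨f, hf, hw⟩ := Nat.sInf_mem (s := {w | ∃ f, IsPIDFun G f ∧ w = ∑ v, f v})
    ⟨_, fun _ => 1, ⟨fun _ => one_le_two, fun _ h => absurd h one_ne_zero⟩, rfl⟩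
  exact ⟨f, hf, hw.symm⟩

lemma IsTwoFairDomSet.of_card_filter_adj {D : Finset V}
    (h : ∀ v ∉ D, #(D.filter (G.Adj v ·)) = 2) : IsTwoFairDomSet G D := by
  refine ⟨fun v hv => ?_, h⟩
  obtain ⟨u, hu⟩ := card_pos.mp (h v hv ▸ two_pos)
  exact ⟨u, (mem_filter.mp hu).1, (mem_filter.mp hu).2⟩

lemma sum_adj_indicator (D : Finset V) (v : V) :
    (∑ u, if G.Adj v u then (if u ∈ D then 1 else 0) else 0) = #(D.filter (G.Adj v ·)) := by
  rw [← sum_filter, sum_boole, Nat.cast_id]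
  congr 1
  ext
  simp [and_comm]

lemma isPIDFun_indicator_iff {D : Finset V} :
    IsPIDFun G (fun v => if v ∈ D then 1 else 0) ↔ IsTwoFairDomSet G D := by
  simp only [IsPIDFun, sum_adj_indicator]
  constructor
  · rintro ⟨-, h⟩
    exact .of_card_filter_adj fun v hv => h v (if_neg hv)
  · rintro ⟨-, h⟩
    refine ⟨fun v => by split_ifs <;> omega, fun v hv => h v fun hvD => ?_⟩
    simp [hvD] at hv

lemma pid_le_card_of_isTwoFairDomSet {D : Finset V} (hD : IsTwoFairDomSet G D) : pid G ≤ #D := by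
  simpa using pid_le_sum_of_isPIDFun (isPIDFun_indicator_iff.mpr hD)

lemma IsPIDFun.exists_isTwoFairDomSet {f : V → ℕ} (hf : IsPIDFun G f) (h01 : ∀ v, f v ≤ 1) :
    ∃ D, IsTwoFairDomSet G D ∧ #D = ∑ v, f v := by
  set D := univ.filter (f · = 1)
  have hfD : f = fun v => if v ∈ D then 1 else 0 := by
    funext v
    have := h01 v
    simp only [D, mem_filter, mem_univ, true_and]
    split_ifs <;> omega
  clear_value D
  subst hfD
  exact ⟨D, isPIDFun_indicator_iff.mp hf, by simp⟩

lemma pid_le_two_of_isUniversal {a : V} (ha : G.IsUniversal a) : pid G ≤ 2 := by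
  have hf : IsPIDFun G (fun v => if v = a then 2 else 0) := by
    refine ⟨fun v => by dsimp only; split_ifs <;> omega, fun v hv => ?_⟩
    have hva : v ≠ a := by rintro rfl; simp at hv
    rw [Fintype.sum_eq_single a fun u hu => by simp [hu]]
    simp [(ha hva.symm).symm]
  simpa using pid_le_sum_of_isPIDFun hf

lemma IsPIDFun.isUniversal_of_sum_eq_three (hconn : G.Connected) {f : V → ℕ} (hf : IsPIDFun G f)
    (hw : ∑ v, f v = 3) {a : V} (ha : f a = 2) : G.IsUniversal a := by
  obtain ⟨b, hb, hfb, hz⟩ := exists_eq_one_of_sum_eq_one (s := univ.erase a) (f := f)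
    (by have := add_sum_erase univ f (mem_univ a); omega)
  have hab : a ≠ b := (ne_of_mem_erase hb).symm
  have hf_other : ∀ v, v ≠ a → v ≠ b → f v = 0 := fun v hva hvb => hz v (by simp [hva]) hvb
  have hsum : ∀ v, (∑ u, if G.Adj v u then f u else 0)
      = (if G.Adj v a then 2 else 0) + (if G.Adj v b then 1 else 0) := by
    intro v
    rw [Fintype.sum_eq_add a b hab fun u hu => by simp [hf_other u hu.1 hu.2], ha, hfb]
  have hzero : ∀ v, f v = 0 → G.Adj v a ∧ ¬G.Adj v b := by
    intro v hv
    have := hf.2 v hv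
    rw [hsum] at this
    split_ifs at this <;> simp_all
  have hba : G.Adj b a := by
    obtain ⟨u, hu⟩ := (hconn.preconnected b a).nonempty_neighborSet_left hab.symm
    by_cases hua : u = a
    · exact hua ▸ hu
    · exact absurd hu.symm (hzero u (hf_other u hua (G.ne_of_adj hu).symm)).2
  intro v hav
  by_cases hvb : v = b
  · exact hvb ▸ hba.symm
  · exact (hzero v (hf_other v hav.symm hvb)).1.symm

end

/-- A connected graph `G` with `pid G > 2` has `pid G = 3` if and only if `G` has a
2-fair dominating set of size 3. -/
theorem pid_eq_three_iff_twoFairDomSet {V : Type*} [Fintype V] (G : SimpleGraph V)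
    (hconn : G.Connected) (hpid : 2 < pid G) :
    pid G = 3 ↔ ∃ D : Finset V, IsTwoFairDomSet G D ∧ D.card = 3 := by
  constructor
  · intro h3
    obtain ⟨f, hf, hw⟩ := exists_isPIDFun_sum_eq_pid G
    by_cases h01 : ∀ v, f v ≤ 1
    · obtain ⟨D, hD, hcard⟩ := hf.exists_isTwoFairDomSet h01
      exact ⟨D, hD, hcard.trans (hw.trans h3)⟩
    · obtain ⟨a, ha⟩ := not_forall.mp h01
      have ha2 : f a = 2 := by have := hf.1 a; omega
      have := pid_le_two_of_isUniversal (hf.isUniversal_of_sum_eq_three hconn (hw.trans h3) ha2)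
      omega
  · rintro ⟨D, hD, hcard⟩
    have := pid_le_card_of_isTwoFairDomSet hD
    omega
end
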